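/- De Finetti representation of the single-group Curie–Weiss model: Let β > 0, n ∈ ℕ, and define F(m) := (1/2)((1/β)(artanh m)² + ln(1 − m²)) for m ∈ (−1,1). Then for every configuration x ∈ {−1,1}^n, exp((β/(2n))(Σ_{i=1}^n x_i)²) = 2^n √(n/(2πβ)) ∫_{(−1,1)} [∏_{i=1}^n ((1+m)/2)^{(1+x_i)/2} ((1−m)/2)^{(1−x_i)/2}] · (exp(−n F(m))/(1 − m²)) dm. Consequently the Curie–Weiss measure ℙ_CWM(x) ∝ exp((β/(2n))(Σ_i x_i)²) equals the mixture of the product measures P_m with respect to the (normalised) de Finetti measure with density proportional to exp(−nF(m))/(1−m²) on (−1,1). -/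

import Mathlib

open MeasureTheory ProbabilityTheory Filter Topology

noncomputable section

/-- The ±1 value of a vote. -/
def val (b : Bool) : ℝ := if b then 1 else -1

/-- The function `F(m) = (1/2)((1/β)(artanh m)² + ln(1 − m²))` of the de Finetti
representation of the Curie–Weiss model, with `artanh m = (1/2) ln((1+m)/(1−m))`. -/
def cwF (β m : ℝ) : ℝ :=
  (1 / 2) * ((1 / β) * ((1 / 2) * Real.log ((1 + m) / (1 - m))) ^ 2
    + Real.log (1 - m ^ 2))

/-- The probability `P_m(X_1 = x_1, …, X_n = x_n)` of a configuration
`x ∈ {−1,1}^n` under the product measure with bias `m`. -/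
def prodProb {n : ℕ} (m : ℝ) (x : Fin n → ℝ) : ℝ :=
  ∏ i, ((1 + m) / 2) ^ ((1 + x i) / 2) * ((1 - m) / 2) ^ ((1 - x i) / 2)


/-!
Substituting `t = artanh m`, so that `dt = dm / (1 - m²)`, maps `(-1, 1)` onto `ℝ` and turns
`P_m(x) e^{-n F(m)}` into `2^{-n} exp (S t - n t² / (2β))` with `S = ∑ xᵢ`: both `P_m(x)` and
`e^{-n F(m)}` are exponentials in `artanh m` up to powers of `√(1 - m²)`, and these cancel.
The Gaussian integral of the latter is `√(2πβ/n) e^{β S² / (2n)}` (Hubbard–Stratonovich).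
Since `∑ₓ P_m(x) = 1`, summing the representation over all configurations identifies the
normalising constant of the Curie–Weiss measure with that of the de Finetti density.
-/

namespace CurieWeiss

open Real Set

lemma hasDerivAt_artanh {x : ℝ} (hx : x ∈ Ioo (-1 : ℝ) 1) :
    HasDerivAt artanh (1 - x ^ 2)⁻¹ x := by
  obtain ⟨h₁, h₂⟩ := hx
  have hlog : (fun y => (1 / 2) * (log (1 + y) - log (1 - y))) =ᶠ[𝓝 x] artanh := by
    filter_upwards [Ioo_mem_nhds h₁ h₂] with y ⟨hy₁, hy₂⟩
    rw [artanh_eq_half_log ⟨hy₁.le, hy₂.le⟩, log_div (by linarith) (by linarith)]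
  have hplus := ((hasDerivAt_id' x).const_add 1).log (by linarith)
  have hminus := ((hasDerivAt_id' x).const_sub 1).log (by linarith)
  refine (((hplus.sub hminus).const_mul (1 / 2)).congr_deriv ?_).congr_of_eventuallyEq hlog.symm
  have hp : 1 + x ≠ 0 := by linarith
  have hm : 1 - x ≠ 0 := by linarith
  rw [show 1 - x ^ 2 = (1 + x) * (1 - x) by ring]
  field_simp
  ring

lemma abs_inv_one_sub_sq_smul {m : ℝ} (hm : m ∈ Ioo (-1 : ℝ) 1) (y : ℝ) :
    |(1 - m ^ 2)⁻¹| • y = (1 - m ^ 2)⁻¹ * y := by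
  have : 0 < 1 - m ^ 2 := by nlinarith [hm.1, hm.2]
  rw [abs_of_pos (inv_pos.2 this), smul_eq_mul]

lemma integrableOn_Ioo_comp_artanh_iff (g : ℝ → ℝ) :
    IntegrableOn (fun m => (1 - m ^ 2)⁻¹ * g (artanh m)) (Ioo (-1) 1) ↔ Integrable g := by
  rw [← integrableOn_univ, ← artanh_bijOn.image_eq,
    integrableOn_image_iff_integrableOn_abs_deriv_smul measurableSet_Ioo
      (fun m hm => (hasDerivAt_artanh hm).hasDerivWithinAt) artanh_injOn]
  exact integrableOn_congr_fun (fun m hm => (abs_inv_one_sub_sq_smul hm _).symm) measurableSet_Ioo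

lemma integral_Ioo_comp_artanh (g : ℝ → ℝ) :
    ∫ m in Ioo (-1 : ℝ) 1, (1 - m ^ 2)⁻¹ * g (artanh m) = ∫ t, g t := by
  symm
  rw [← setIntegral_univ, ← artanh_bijOn.image_eq,
    integral_image_eq_integral_abs_deriv_smul measurableSet_Ioo
      (fun m hm => (hasDerivAt_artanh hm).hasDerivWithinAt) artanh_injOn]
  exact setIntegral_congr_fun measurableSet_Ioo (fun m hm => abs_inv_one_sub_sq_smul hm _)

lemma exp_mul_sub_mul_sq_eq (a b t : ℝ) (ha : a ≠ 0) :
    exp (b * t - a * t ^ 2) = exp (b ^ 2 / (4 * a)) * exp (-a * (t - b / (2 * a)) ^ 2) := by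
  rw [← exp_add]
  congr 1
  field_simp
  ring

lemma integrable_exp_mul_sub_mul_sq {a : ℝ} (ha : 0 < a) (b : ℝ) :
    Integrable (fun t => exp (b * t - a * t ^ 2)) := by
  simp_rw [exp_mul_sub_mul_sq_eq a b _ ha.ne']
  exact ((integrable_exp_neg_mul_sq ha).comp_sub_right _).const_mul _

lemma integral_exp_mul_sub_mul_sq {a : ℝ} (ha : 0 < a) (b : ℝ) :
    ∫ t, exp (b * t - a * t ^ 2) = √(π / a) * exp (b ^ 2 / (4 * a)) := by
  simp_rw [exp_mul_sub_mul_sq_eq a b _ ha.ne']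
  rw [integral_const_mul, integral_sub_right_eq_self (fun t => exp (-a * t ^ 2)),
    integral_gaussian, mul_comm]

lemma rpow_mul_rpow_eq_exp {m : ℝ} (hm : m ∈ Ioo (-1 : ℝ) 1) (s : ℝ) :
    ((1 + m) / 2) ^ ((1 + s) / 2) * ((1 - m) / 2) ^ ((1 - s) / 2)
      = exp (log (1 - m ^ 2) / 2 - log 2 + s * artanh m) := by
  obtain ⟨h₁, h₂⟩ := hm
  have hp : 0 < 1 + m := by linarith
  have hq : 0 < 1 - m := by linarith
  rw [rpow_def_of_pos (by positivity), rpow_def_of_pos (by positivity), ← exp_add,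
    artanh_eq_half_log ⟨h₁.le, h₂.le⟩, log_div hp.ne' hq.ne', log_div hp.ne' two_ne_zero,
    log_div hq.ne' two_ne_zero, show 1 - m ^ 2 = (1 + m) * (1 - m) by ring,
    log_mul hp.ne' hq.ne']
  ring_nf

lemma prodProb_eq_exp {n : ℕ} {m : ℝ} (hm : m ∈ Ioo (-1 : ℝ) 1) (x : Fin n → ℝ) :
    prodProb m x = exp (n * (log (1 - m ^ 2) / 2 - log 2) + (∑ i, x i) * artanh m) := by
  simp only [prodProb, rpow_mul_rpow_eq_exp hm, ← exp_sum, Finset.sum_add_distrib,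
    Finset.sum_const, Finset.card_univ, Fintype.card_fin, nsmul_eq_mul, Finset.sum_mul]

lemma cwF_eq_artanh {m : ℝ} (hm : m ∈ Ioo (-1 : ℝ) 1) (β : ℝ) :
    cwF β m = artanh m ^ 2 / (2 * β) + log (1 - m ^ 2) / 2 := by
  rw [cwF, artanh_eq_half_log ⟨hm.1.le, hm.2.le⟩]
  ring

def deFinettiDensity (β : ℝ) (n : ℕ) (m : ℝ) : ℝ :=
  exp (-(n : ℝ) * cwF β m) / (1 - m ^ 2)

lemma prodProb_mul_deFinettiDensity {n : ℕ} {m : ℝ} (hm : m ∈ Ioo (-1 : ℝ) 1) (β : ℝ)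
    (x : Fin n → ℝ) :
    prodProb m x * deFinettiDensity β n m
      = (2 ^ n)⁻¹ * ((1 - m ^ 2)⁻¹ *
          exp ((∑ i, x i) * artanh m - n / (2 * β) * artanh m ^ 2)) := by
  have h2n : ((2 : ℝ) ^ n)⁻¹ = exp (-(n * log 2)) := by
    rw [exp_neg, exp_nat_mul, exp_log two_pos]
  rw [deFinettiDensity, prodProb_eq_exp hm, cwF_eq_artanh hm, h2n, ← mul_div_assoc, ← exp_add,
    div_eq_inv_mul, mul_left_comm, ← exp_add]
  ring_nf

variable {β : ℝ} {n : ℕ}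

lemma integrableOn_prodProb_mul_deFinettiDensity (hβ : 0 < β) (hn : 0 < n) (x : Fin n → ℝ) :
    IntegrableOn (fun m => prodProb m x * deFinettiDensity β n m) (Ioo (-1) 1) := by
  have hgauss := (integrable_exp_mul_sub_mul_sq (a := n / (2 * β)) (by positivity)
    (∑ i, x i)).const_mul ((2 : ℝ) ^ n)⁻¹
  rw [← integrableOn_Ioo_comp_artanh_iff] at hgauss
  refine hgauss.congr_fun (fun m hm => ?_) measurableSet_Ioo
  rw [prodProb_mul_deFinettiDensity hm, mul_left_comm]

lemma integral_prodProb_mul_deFinettiDensity (hβ : 0 < β) (hn : 0 < n) (x : Fin n → ℝ) :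
    ∫ m in Ioo (-1 : ℝ) 1, prodProb m x * deFinettiDensity β n m
      = (2 ^ n)⁻¹ * (√(2 * π * β / n) * exp (β / (2 * n) * (∑ i, x i) ^ 2)) := by
  have ha : (0 : ℝ) < n / (2 * β) := by positivity
  rw [setIntegral_congr_fun measurableSet_Ioo (fun m hm => prodProb_mul_deFinettiDensity hm β x),
    integral_const_mul,
    integral_Ioo_comp_artanh fun t => exp ((∑ i, x i) * t - n / (2 * β) * t ^ 2),
    integral_exp_mul_sub_mul_sq ha]
  congr 3
  · field_simp
  · field_simp
    ring

theorem exp_sq_sum_eq_integral (hβ : 0 < β) (hn : 0 < n) (x : Fin n → ℝ) :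
    exp (β / (2 * n) * (∑ i, x i) ^ 2)
      = 2 ^ n * √(n / (2 * π * β)) *
          ∫ m in Ioo (-1 : ℝ) 1, prodProb m x * deFinettiDensity β n m := by
  have hsqrt : √(n / (2 * π * β)) * √(2 * π * β / n) = 1 := by
    rw [← sqrt_mul (by positivity), div_mul_div_comm, mul_comm (n : ℝ),
      div_self (by positivity), sqrt_one]
  rw [integral_prodProb_mul_deFinettiDensity hβ hn, mul_mul_mul_comm, ← mul_assoc,
    mul_inv_cancel₀ (by positivity), one_mul, ← mul_assoc, hsqrt, one_mul]

lemma sum_prodProb_val (n : ℕ) (m : ℝ) :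
    ∑ y : Fin n → Bool, prodProb m (fun i => val (y i)) = 1 := by
  have hval (b : Bool) : ((1 + m) / 2) ^ ((1 + val b) / 2) * ((1 - m) / 2) ^ ((1 - val b) / 2)
      = if b then (1 + m) / 2 else (1 - m) / 2 := by
    cases b <;> norm_num [val]
  simp only [prodProb, hval]
  rw [← Fintype.prod_sum fun _ (b : Bool) => if b then (1 + m) / 2 else (1 - m) / 2]
  have hsum : (1 + m) / 2 + (1 - m) / 2 = 1 := by ring
  simp only [Fintype.sum_bool, if_true, Bool.false_eq_true, if_false, hsum,
    Finset.prod_const_one]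

lemma sum_exp_sq_sum_val_eq_integral (hβ : 0 < β) (hn : 0 < n) :
    ∑ y : Fin n → Bool, exp (β / (2 * n) * (∑ i, val (y i)) ^ 2)
      = 2 ^ n * √(n / (2 * π * β)) * ∫ m in Ioo (-1 : ℝ) 1, deFinettiDensity β n m := by
  simp_rw [exp_sq_sum_eq_integral hβ hn, ← Finset.mul_sum]
  rw [← integral_finsetSum _ fun y _ => integrableOn_prodProb_mul_deFinettiDensity hβ hn _]
  simp_rw [← Finset.sum_mul, sum_prodProb_val, one_mul]

end CurieWeiss

open CurieWeiss in
theorem cwm_de_finetti_representation_general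
    (β : ℝ) (hβ : 0 < β) (n : ℕ) (hn : 0 < n)
    (x : Fin n → ℝ) :
    Real.exp (β / (2 * n) * (∑ i, x i) ^ 2)
      = 2 ^ n * Real.sqrt (n / (2 * Real.pi * β)) *
        ∫ m in Set.Ioo (-1 : ℝ) 1,
          prodProb m x * (Real.exp (-(n : ℝ) * cwF β m) / (1 - m ^ 2))
    ∧ Real.exp (β / (2 * n) * (∑ i, x i) ^ 2) /
        (∑ y : Fin n → Bool, Real.exp (β / (2 * n) * (∑ i, val (y i)) ^ 2))
      = (∫ m in Set.Ioo (-1 : ℝ) 1,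
          prodProb m x * (Real.exp (-(n : ℝ) * cwF β m) / (1 - m ^ 2))) /
        (∫ m in Set.Ioo (-1 : ℝ) 1,
          Real.exp (-(n : ℝ) * cwF β m) / (1 - m ^ 2)) := by
  have hc : 0 < 2 ^ n * Real.sqrt (n / (2 * Real.pi * β)) := by positivity
  refine ⟨exp_sq_sum_eq_integral hβ hn x, ?_⟩
  rw [exp_sq_sum_eq_integral hβ hn x, sum_exp_sq_sum_val_eq_integral hβ hn]
  exact mul_div_mul_left _ _ hc.ne'

/-- **De Finetti representation of the single-group Curie–Weiss model**: for
`β > 0` and every configuration `x ∈ {−1,1}^n`,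
`exp((β/(2n))(Σ x_i)²) = 2^n √(n/(2πβ)) ∫_{(−1,1)} P_m(x) e^{−nF(m)}/(1−m²) dm`;
consequently the Curie–Weiss measure `ℙ_CWM(x) ∝ exp((β/(2n))(Σ x_i)²)` is the
mixture of the product measures `P_m` with respect to the normalised de Finetti
measure with density proportional to `e^{−nF(m)}/(1−m²)` on `(−1,1)`. -/
theorem cwm_de_finetti_representation
    (β : ℝ) (hβ : 0 < β) (n : ℕ) (hn : 0 < n)
    (x : Fin n → ℝ) (hx : ∀ i, x i = 1 ∨ x i = -1) :
    Real.exp (β / (2 * n) * (∑ i, x i) ^ 2)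
      = 2 ^ n * Real.sqrt (n / (2 * Real.pi * β)) *
        ∫ m in Set.Ioo (-1 : ℝ) 1,
          prodProb m x * (Real.exp (-(n : ℝ) * cwF β m) / (1 - m ^ 2))
    ∧ Real.exp (β / (2 * n) * (∑ i, x i) ^ 2) /
        (∑ y : Fin n → Bool, Real.exp (β / (2 * n) * (∑ i, val (y i)) ^ 2))
      = (∫ m in Set.Ioo (-1 : ℝ) 1,
          prodProb m x * (Real.exp (-(n : ℝ) * cwF β m) / (1 - m ^ 2))) /
        (∫ m in Set.Ioo (-1 : ℝ) 1,
          Real.exp (-(n : ℝ) * cwF β m) / (1 - m ^ 2)) :=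
  cwm_de_finetti_representation_general β hβ n hn x
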